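/- In the counterexample with initial loads (0, 2, 6) and jobs 7, 5, 5 on three identical machines: in the constrained optimum (loads (10, 9, 6)), the job of size 7 pays 9 and each job of size 5 pays 10; the size-7 job can deviate to M1, and assigning the size-7 job to M1 and then optimally completing (both 5s split as one to M2 and one to M3) yields loads (7, 7, 11), with makespan 11 and the 7-job paying 7 < 9. Hence the size-7 job strictly prefers deviating from the constrained optimum when the remaining players subsequently play a constrained optimum, showing the key claim of the two-machine adaptive-optimality proof fails for three machines. -/

import Mathlib

open Classical Finset

noncomputable section

/-- Initial loads on the three identical machines M1, M2, M3. -/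
def initLoads : Fin 3 → ℝ := ![0, 2, 6]

/-- Sizes of the three remaining jobs (job 0 has size 7, jobs 1, 2 size 5). -/
def sizes : Fin 3 → ℝ := ![7, 5, 5]

/-- Load of machine `i` after the completion `c` assigns the remaining jobs. -/
def loadI (c : Fin 3 → Fin 3) (i : Fin 3) : ℝ :=
  initLoads i + ∑ j, if c j = i then sizes j else 0

/-- Makespan of the completed schedule. -/
def mkI (c : Fin 3 → Fin 3) : ℝ := ⨆ i : Fin 3, loadI c i

/-- A job's cost: the final load of its machine. -/
def costI (c : Fin 3 → Fin 3) (j : Fin 3) : ℝ := loadI c (c j)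

/-- The constrained optimum: size-7 job to M2, both size-5 jobs to M1. -/
def cstar : Fin 3 → Fin 3 := ![1, 0, 0]

/-- The deviation: size-7 job to M1, then the constrained-optimal completion of
the two size-5 jobs (one to M2, one to M3). -/
def cdev : Fin 3 → Fin 3 := ![0, 1, 2]

lemma load_le_mk (c : Fin 3 → Fin 3) (i : Fin 3) : loadI c i ≤ mkI c :=
  le_ciSup (Set.Finite.bddAbove (Set.finite_range _)) i

lemma mk_le (c : Fin 3 → Fin 3) (M : ℝ) (h : ∀ i, loadI c i ≤ M) : mkI c ≤ M :=
  ciSup_le h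

lemma fin3_cases (x : Fin 3) : x = 0 ∨ x = 1 ∨ x = 2 := by omega

lemma mkI_cstar : mkI cstar = 10 := by
  apply le_antisymm
  · apply mk_le
    intro i
    fin_cases i <;> norm_num (config := {decide := true}) [loadI, cstar, initLoads, sizes, Fin.sum_univ_three, Matrix.cons_val_two, Matrix.tail_cons, Matrix.head_cons]
  · have := load_le_mk cstar 0
    norm_num (config := {decide := true}) [loadI, cstar, initLoads, sizes, Fin.sum_univ_three, Matrix.cons_val_two, Matrix.tail_cons, Matrix.head_cons] at this
    unfold cstar; linarith

lemma mkI_cdev : mkI cdev = 11 := by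
  apply le_antisymm
  · apply mk_le
    intro i
    fin_cases i <;> norm_num (config := {decide := true}) [loadI, cdev, initLoads, sizes, Fin.sum_univ_three, Matrix.cons_val_two, Matrix.tail_cons, Matrix.head_cons]
  · have := load_le_mk cdev 2
    norm_num (config := {decide := true}) [loadI, cdev, initLoads, sizes, Fin.sum_univ_three, Matrix.cons_val_two, Matrix.tail_cons, Matrix.head_cons] at this
    unfold cdev; linarith

/-- In the counterexample the size-7 job pays 9 and each size-5 job pays 10 in
the constrained optimum `cstar` (which is optimal); deviating to M1 followed by
the constrained-optimal completion `cdev` of the two size-5 jobs yields loads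
(7, 7, 11), where the size-7 job pays only 7 < 9.  Hence the two-machine key
claim fails for three machines. -/
theorem three_machines_key_claim_fails :
    (∀ c : Fin 3 → Fin 3, mkI cstar ≤ mkI c) ∧
    costI cstar 0 = 9 ∧ costI cstar 1 = 10 ∧ costI cstar 2 = 10 ∧
    loadI cdev 0 = 7 ∧ loadI cdev 1 = 7 ∧ loadI cdev 2 = 11 ∧
    (∀ c : Fin 3 → Fin 3, c 0 = 0 → mkI cdev ≤ mkI c) ∧
    costI cdev 0 < costI cstar 0 := by
  refine ⟨?_, ?_, ?_, ?_, ?_, ?_, ?_, ?_, ?_⟩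
  · intro c
    rw [mkI_cstar]
    have H0 := load_le_mk c 0
    have H1 := load_le_mk c 1
    have H2 := load_le_mk c 2
    rcases fin3_cases (c 0) with h0 | h0 | h0 <;>
      rcases fin3_cases (c 1) with h1 | h1 | h1 <;>
        rcases fin3_cases (c 2) with h2 | h2 | h2 <;>
          simp only [loadI, initLoads, sizes, Fin.sum_univ_three, Fin.ext_iff, Matrix.cons_val_two, Matrix.tail_cons, Matrix.head_cons, Matrix.cons_val_one, Matrix.cons_val_zero, h0, h1, h2] at H0 H1 H2 <;>
            norm_num at H0 H1 H2 <;> linarith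
  · norm_num (config := {decide := true}) [costI, loadI, cstar, initLoads, sizes, Fin.sum_univ_three, Matrix.cons_val_two, Matrix.tail_cons, Matrix.head_cons]
  · norm_num (config := {decide := true}) [costI, loadI, cstar, initLoads, sizes, Fin.sum_univ_three, Matrix.cons_val_two, Matrix.tail_cons, Matrix.head_cons]
  · norm_num (config := {decide := true}) [costI, loadI, cstar, initLoads, sizes, Fin.sum_univ_three, Matrix.cons_val_two, Matrix.tail_cons, Matrix.head_cons]
  · norm_num (config := {decide := true}) [loadI, cdev, initLoads, sizes, Fin.sum_univ_three, Matrix.cons_val_two, Matrix.tail_cons, Matrix.head_cons]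
  · norm_num (config := {decide := true}) [loadI, cdev, initLoads, sizes, Fin.sum_univ_three, Matrix.cons_val_two, Matrix.tail_cons, Matrix.head_cons]
  · norm_num (config := {decide := true}) [loadI, cdev, initLoads, sizes, Fin.sum_univ_three, Matrix.cons_val_two, Matrix.tail_cons, Matrix.head_cons]
  · intro c h0
    rw [mkI_cdev]
    have H0 := load_le_mk c 0
    have H1 := load_le_mk c 1
    have H2 := load_le_mk c 2
    rcases fin3_cases (c 1) with h1 | h1 | h1 <;>
      rcases fin3_cases (c 2) with h2 | h2 | h2 <;>
        simp only [loadI, initLoads, sizes, Fin.sum_univ_three, Fin.ext_iff, Matrix.cons_val_two, Matrix.tail_cons, Matrix.head_cons, Matrix.cons_val_one, Matrix.cons_val_zero, h0, h1, h2] at H0 H1 H2 <;>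
          norm_num at H0 H1 H2 <;> linarith
  · norm_num (config := {decide := true}) [costI, loadI, cstar, cdev, initLoads, sizes, Fin.sum_univ_three, Matrix.cons_val_two, Matrix.tail_cons, Matrix.head_cons]

end
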